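/- Srivastava–Pintér type theorem: for n ∈ ℕ₀ and m ∈ ℕ, 𝔊_{n,q}^{(α)}(x,y) = ∑_{k=0}^n [n choose k]_q (1/(m^{n-k-1}[k+1]_q)) · [ 2[k+1]_q ∑_{j=0}^k [k choose j]_q m^{j-k} 𝔊_{j,q}^{(α-1)}(x,-1) − ∑_{j=0}^{k+1} [k+1 choose j]_q m^{j-k-1} 𝔊_{j,q}^{(α)}(x,-1) − 𝔊_{k+1,q}^{(α)}(x,0) ] · 𝔅_{n-k,q}(0, my). -/

import Mathlib

open PowerSeries Finset

/-- The `q`-integer `[n]_q = 1 + q + ⋯ + q^(n-1)`. -/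
noncomputable def qInt (q : ℂ) (n : ℕ) : ℂ := ∑ i ∈ Finset.range n, q ^ i

/-- The `q`-factorial `[n]_q!`. -/
noncomputable def qFact (q : ℂ) : ℕ → ℂ
  | 0 => 1
  | n + 1 => qFact q n * qInt q (n + 1)

/-- The Gaussian (`q`-binomial) coefficient. -/
noncomputable def qBinom (q : ℂ) (n k : ℕ) : ℂ := qFact q n / (qFact q k * qFact q (n - k))

/-- The formal power series `e_q(tx) = ∑ x^n t^n/[n]_q!`. -/
noncomputable def qExpSeries (q : ℂ) (x : ℂ) : PowerSeries ℂ :=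
  PowerSeries.mk fun n => x ^ n / qFact q n

/-- The formal power series `E_q(ty) = ∑ q^(n(n-1)/2) y^n t^n/[n]_q!`. -/
noncomputable def qExpSeries' (q : ℂ) (y : ℂ) : PowerSeries ℂ :=
  PowerSeries.mk fun n => q ^ (n * (n - 1) / 2) * y ^ n / qFact q n

/-- Generating series `(2t/(e_q(t)+1))^α e_q(tx) E_q(ty)` of the `q`-Genocchi polynomials. -/
noncomputable def qGenocchiSeries (q : ℂ) (α : ℕ) (x y : ℂ) : PowerSeries ℂ :=
  (PowerSeries.C (2 : ℂ) * PowerSeries.X * (qExpSeries q 1 + 1)⁻¹) ^ α *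
    qExpSeries q x * qExpSeries' q y

/-- The `q`-Genocchi polynomial `𝔊_{n,q}^{(α)}(x,y)`. -/
noncomputable def qGenocchi (q : ℂ) (α : ℕ) (x y : ℂ) (n : ℕ) : ℂ :=
  qFact q n * PowerSeries.coeff n (qGenocchiSeries q α x y)

/-- The `q`-Bernoulli polynomial `𝔅_{n,q}(x,y)`, defined via
`(t/(e_q(t)-1)) e_q(tx) E_q(ty) = ∑ 𝔅_{n,q}(x,y) t^n/[n]_q!`
(note `t/(e_q(t)-1)` is the inverse of the series `∑ t^n/[n+1]_q!`). -/
noncomputable def qBernoulli (q : ℂ) (x y : ℂ) (n : ℕ) : ℂ :=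
  qFact q n * PowerSeries.coeff n
    ((PowerSeries.mk fun k => (qFact q (k + 1))⁻¹)⁻¹ * qExpSeries q x * qExpSeries' q y)

/-- The Gauss polynomial `(x+y)_q^n = ∑_k [n k]_q q^(k(k-1)/2) x^(n-k) y^k`. -/
noncomputable def qAddPow (q : ℂ) (x y : ℂ) (n : ℕ) : ℂ :=
  ∑ k ∈ Finset.range (n + 1), qBinom q n k * q ^ (k * (k - 1) / 2) * x ^ (n - k) * y ^ k

/-!
Everything is a comparison of `q`-exponential generating series. The Jackson derivative of
`E_q(-t) e_q(t)` vanishes, so `E_q(-t) e_q(t) = 1`; together with `2t/(e_q(t)+1) · (e_q(t)+1) = 2t`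
this gives `𝔊^{(α+1)}(x,0) = 2t 𝔊^{(α)}(x,-1) - 𝔊^{(α+1)}(x,-1)`. Hence the bracket of the theorem
is the coefficient sequence of `𝔊^{(α+1)}(x,0) (e_q(t/m) - 1)/t = m⁻¹ 𝔊^{(α+1)}(x,0) D(t/m)`, where
`e_q(t) = 1 + t D(t)`. The other factor, `m^{1-l} 𝔅_{l,q}(0,my)`, has generating series
`m D(t/m)⁻¹ E_q(ty)`, and the product of the two is `𝔊^{(α+1)}(x,0) E_q(ty) = 𝔊^{(α+1)}(x,y)`.
-/

section QCalculus

variable {q : ℂ}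

@[simp]
lemma qFact_succ (q : ℂ) (n : ℕ) : qFact q (n + 1) = qFact q n * qInt q (n + 1) := rfl

lemma qInt_zero (q : ℂ) : qInt q 0 = 0 := by simp [qInt]

lemma qInt_add (q : ℂ) (a b : ℕ) : qInt q (a + b) = qInt q a + q ^ a * qInt q b := by
  simp [qInt, Finset.sum_range_add, pow_add, Finset.mul_sum]

lemma qFact_ne_zero (hq : ∀ n : ℕ, qInt q (n + 1) ≠ 0) : ∀ n, qFact q n ≠ 0
  | 0 => one_ne_zero
  | n + 1 => mul_ne_zero (qFact_ne_zero hq n) (hq n)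

noncomputable def qEGF (q : ℂ) (a : ℕ → ℂ) : PowerSeries ℂ :=
  PowerSeries.mk fun n => a n / qFact q n

@[simp]
lemma coeff_qEGF (q : ℂ) (a : ℕ → ℂ) (n : ℕ) : coeff n (qEGF q a) = a n / qFact q n :=
  coeff_mk _ _

lemma qEGF_injective (hq : ∀ n : ℕ, qInt q (n + 1) ≠ 0) : Function.Injective (qEGF q) := by
  intro a b h
  funext n
  simpa [qFact_ne_zero hq n] using congrArg (coeff n) h

lemma qEGF_qFact_mul_coeff (hq : ∀ n : ℕ, qInt q (n + 1) ≠ 0) (f : PowerSeries ℂ) :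
    qEGF q (fun n => qFact q n * coeff n f) = f := by
  ext n
  simp [qFact_ne_zero hq n]

lemma qEGF_sub (q : ℂ) (a b : ℕ → ℂ) : qEGF q (a - b) = qEGF q a - qEGF q b := by
  ext n
  simp [sub_div]

lemma qEGF_const_mul (q c : ℂ) (a : ℕ → ℂ) : qEGF q (fun n => c * a n) = C c * qEGF q a := by
  ext n
  simp [mul_div_assoc]

lemma rescale_qEGF (q c : ℂ) (a : ℕ → ℂ) :
    rescale c (qEGF q a) = qEGF q (fun n => c ^ n * a n) := by
  ext n
  simp [mul_div_assoc]

lemma X_mul_qEGF (hq : ∀ n : ℕ, qInt q (n + 1) ≠ 0) (a : ℕ → ℂ) :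
    X * qEGF q a = qEGF q (fun n => qInt q n * a (n - 1)) := by
  ext n
  rcases n with _ | n
  · simp [qInt_zero]
  · rw [coeff_succ_X_mul, coeff_qEGF, coeff_qEGF, qFact_succ, Nat.add_sub_cancel,
      mul_comm (qFact q n), ← div_div, mul_div_cancel_left₀ _ (hq n)]

lemma qEGF_mul (hq : ∀ n : ℕ, qInt q (n + 1) ≠ 0) (a b : ℕ → ℂ) :
    qEGF q a * qEGF q b =
      qEGF q (fun n => ∑ k ∈ range (n + 1), qBinom q n k * a k * b (n - k)) := by
  ext n
  rw [coeff_mul, Finset.Nat.sum_antidiagonal_eq_sum_range_succ_mk, coeff_qEGF, Finset.sum_div]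
  refine Finset.sum_congr rfl fun k _ => ?_
  simp only [coeff_qEGF]
  have := qFact_ne_zero hq n
  rw [qBinom]
  field_simp

/-- The Jackson `q`-derivative `(f(qt) - f(t))/((q - 1)t)`, written coefficientwise so that it also
makes sense at `q = 1`. -/
noncomputable def qDeriv (q : ℂ) (f : PowerSeries ℂ) : PowerSeries ℂ :=
  PowerSeries.mk fun n => qInt q (n + 1) * coeff (n + 1) f

@[simp]
lemma coeff_qDeriv (q : ℂ) (f : PowerSeries ℂ) (n : ℕ) :
    coeff n (qDeriv q f) = qInt q (n + 1) * coeff (n + 1) f :=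
  coeff_mk _ _

lemma qDeriv_mul (q : ℂ) (f g : PowerSeries ℂ) :
    qDeriv q (f * g) = rescale q f * qDeriv q g + qDeriv q f * g := by
  ext n
  have hsplit : ∀ p ∈ antidiagonal (n + 1), qInt q (n + 1) * (coeff p.1 f * coeff p.2 g) =
      qInt q p.1 * coeff p.1 f * coeff p.2 g +
        q ^ p.1 * coeff p.1 f * (qInt q p.2 * coeff p.2 g) := by
    intro p hp
    rw [← mem_antidiagonal.mp hp, qInt_add]
    ring
  simp only [coeff_qDeriv, coeff_mul, map_add, Finset.mul_sum, Finset.sum_congr rfl hsplit,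
    Finset.sum_add_distrib, coeff_rescale]
  rw [Finset.Nat.sum_antidiagonal_succ, Finset.Nat.sum_antidiagonal_succ']
  simp [qInt_zero, add_comm, mul_assoc, mul_left_comm]

lemma eq_C_of_qDeriv_eq_zero (hq : ∀ n : ℕ, qInt q (n + 1) ≠ 0) {f : PowerSeries ℂ}
    (hf : qDeriv q f = 0) : f = C (constantCoeff f) := by
  ext n
  rcases n with _ | n
  · simp
  · have := congrArg (coeff n) hf
    simp only [coeff_qDeriv, map_zero, mul_eq_zero, hq n, false_or] at this
    simp [this]

lemma qDeriv_qExpSeries (hq : ∀ n : ℕ, qInt q (n + 1) ≠ 0) (x : ℂ) :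
    qDeriv q (qExpSeries q x) = C x * qExpSeries q x := by
  ext n
  have := qFact_ne_zero hq n
  simp only [coeff_qDeriv, qExpSeries, coeff_mk, coeff_C_mul, qFact_succ]
  field_simp [hq n]
  ring

lemma qDeriv_qExpSeries' (hq : ∀ n : ℕ, qInt q (n + 1) ≠ 0) (y : ℂ) :
    qDeriv q (qExpSeries' q y) = C y * rescale q (qExpSeries' q y) := by
  ext n
  have := qFact_ne_zero hq n
  have htri : (n + 1) * (n + 1 - 1) / 2 = n * (n - 1) / 2 + n := by
    rw [← Finset.sum_range_id, ← Finset.sum_range_id, Finset.sum_range_succ]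
  simp only [coeff_qDeriv, qExpSeries', coeff_mk, coeff_C_mul, coeff_rescale, qFact_succ, htri]
  field_simp [hq n]
  ring

lemma qExpSeries'_neg_mul_qExpSeries (hq : ∀ n : ℕ, qInt q (n + 1) ≠ 0) (x : ℂ) :
    qExpSeries' q (-x) * qExpSeries q x = 1 := by
  have hconst : qDeriv q (qExpSeries' q (-x) * qExpSeries q x) = 0 := by
    rw [qDeriv_mul, qDeriv_qExpSeries hq, qDeriv_qExpSeries' hq, map_neg]
    ring
  rw [eq_C_of_qDeriv_eq_zero hq hconst, map_mul, ← coeff_zero_eq_constantCoeff_apply,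
    ← coeff_zero_eq_constantCoeff_apply]
  simp [qExpSeries, qExpSeries', qFact]

lemma qExpSeries_zero (q : ℂ) : qExpSeries q 0 = 1 := by
  ext n
  cases n <;> simp [qExpSeries, qFact, coeff_one]

lemma qExpSeries'_zero (q : ℂ) : qExpSeries' q 0 = 1 := by
  ext n
  cases n <;> simp [qExpSeries', qFact, coeff_one]

lemma rescale_qExpSeries' (q c y : ℂ) : rescale c (qExpSeries' q y) = qExpSeries' q (c * y) := by
  ext n
  simp only [coeff_rescale, qExpSeries', coeff_mk, mul_pow]
  ring

lemma qExpSeries_one_eq (q : ℂ) :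
    qExpSeries q 1 = 1 + X * PowerSeries.mk fun k => (qFact q (k + 1))⁻¹ := by
  ext n
  cases n <;> simp [qExpSeries, qFact, coeff_one, coeff_succ_X_mul]

lemma qGenocchiSeries_mul_qExpSeries' (q : ℂ) (α : ℕ) (x y : ℂ) :
    qGenocchiSeries q α x 0 * qExpSeries' q y = qGenocchiSeries q α x y := by
  rw [qGenocchiSeries, qGenocchiSeries, qExpSeries'_zero, mul_one]

lemma qGenocchiSeries_neg_one_mul_qExpSeries (hq : ∀ n : ℕ, qInt q (n + 1) ≠ 0) (α : ℕ) (x : ℂ) :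
    qGenocchiSeries q α x (-1) * qExpSeries q 1 = qGenocchiSeries q α x 0 := by
  rw [qGenocchiSeries, qGenocchiSeries, mul_assoc, qExpSeries'_neg_mul_qExpSeries hq,
    qExpSeries'_zero]

lemma qGenocchiSeries_succ_zero (hq : ∀ n : ℕ, qInt q (n + 1) ≠ 0) (α : ℕ) (x : ℂ) :
    qGenocchiSeries q (α + 1) x 0 =
      C 2 * X * qGenocchiSeries q α x (-1) - qGenocchiSeries q (α + 1) x (-1) := by
  have hunit : (qExpSeries q 1 + 1)⁻¹ * (qExpSeries q 1 + 1) = 1 := by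
    refine PowerSeries.inv_mul_cancel _ ?_
    rw [map_add, map_one, ← coeff_zero_eq_constantCoeff_apply]
    norm_num [qExpSeries, qFact]
  rw [← qGenocchiSeries_neg_one_mul_qExpSeries hq, qGenocchiSeries, qGenocchiSeries]
  linear_combination (C 2 * X * (qExpSeries q 1 + 1)⁻¹) ^ α * qExpSeries q x *
    qExpSeries' q (-1) * C 2 * X * hunit

lemma qEGF_qGenocchi (hq : ∀ n : ℕ, qInt q (n + 1) ≠ 0) (α : ℕ) (x y : ℂ) :
    qEGF q (qGenocchi q α x y) = qGenocchiSeries q α x y :=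
  qEGF_qFact_mul_coeff hq _

lemma qEGF_qBernoulli (hq : ∀ n : ℕ, qInt q (n + 1) ≠ 0) (y : ℂ) :
    qEGF q (qBernoulli q 0 y) =
      (PowerSeries.mk fun k => (qFact q (k + 1))⁻¹)⁻¹ * qExpSeries' q y := by
  unfold qBernoulli
  rw [qEGF_qFact_mul_coeff hq, qExpSeries_zero, mul_one]

lemma qEGF_mul_rescale_qExpSeries_one (hq : ∀ n : ℕ, qInt q (n + 1) ≠ 0) (m : ℂ) (a : ℕ → ℂ) :
    qEGF q a * rescale m⁻¹ (qExpSeries q 1) =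
      qEGF q (fun n => ∑ j ∈ range (n + 1), qBinom q n j * m ^ ((j : ℤ) - n) * a j) := by
  rw [show qExpSeries q 1 = qEGF q (fun n => 1 ^ n) from rfl, rescale_qEGF, qEGF_mul hq]
  refine congrArg _ (funext fun n => Finset.sum_congr rfl fun j hj => ?_)
  have hexp : (j : ℤ) - n = -((n - j : ℕ) : ℤ) := by
    have := Finset.mem_range_succ_iff.mp hj
    omega
  rw [hexp, zpow_neg, zpow_natCast, inv_pow, one_pow, mul_one]
  ring

noncomputable def qGenocchiBracket (q : ℂ) (α : ℕ) (m x : ℂ) (k : ℕ) : ℂ :=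
  2 * qInt q (k + 1) *
      (∑ j ∈ range (k + 1), qBinom q k j * m ^ ((j : ℤ) - (k : ℤ)) * qGenocchi q α x (-1) j) -
    (∑ j ∈ range (k + 2),
      qBinom q (k + 1) j * m ^ ((j : ℤ) - (k : ℤ) - 1) * qGenocchi q (α + 1) x (-1) j) -
    qGenocchi q (α + 1) x 0 (k + 1)

lemma qEGF_qGenocchiBracket (hq : ∀ n : ℕ, qInt q (n + 1) ≠ 0) (α : ℕ) (m x : ℂ) :
    qEGF q (fun k => qGenocchiBracket q α m x k / qInt q (k + 1)) =
      C m⁻¹ * qGenocchiSeries q (α + 1) x 0 *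
        rescale m⁻¹ (PowerSeries.mk fun k => (qFact q (k + 1))⁻¹) := by
  set conv : (ℕ → ℂ) → ℕ → ℂ := fun a n =>
    ∑ j ∈ range (n + 1), qBinom q n j * m ^ ((j : ℤ) - n) * a j with hconv
  set b : ℕ → ℂ := fun n =>
    2 * qInt q n * conv (qGenocchi q α x (-1)) (n - 1) - conv (qGenocchi q (α + 1) x (-1)) n -
      qGenocchi q (α + 1) x 0 n with hb
  have hbSeries : qEGF q b = X * (C m⁻¹ * qGenocchiSeries q (α + 1) x 0 *
      rescale m⁻¹ (PowerSeries.mk fun k => (qFact q (k + 1))⁻¹)) := by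
    calc qEGF q b
        = C 2 * (X * (qGenocchiSeries q α x (-1) * rescale m⁻¹ (qExpSeries q 1))) -
            qGenocchiSeries q (α + 1) x (-1) * rescale m⁻¹ (qExpSeries q 1) -
            qGenocchiSeries q (α + 1) x 0 := by
          rw [← qEGF_qGenocchi hq, ← qEGF_qGenocchi hq, ← qEGF_qGenocchi hq,
            qEGF_mul_rescale_qExpSeries_one hq, qEGF_mul_rescale_qExpSeries_one hq,
            X_mul_qEGF hq, ← qEGF_const_mul, ← qEGF_sub, ← qEGF_sub]
          congr 1
          funext n
          simp only [hb, Pi.sub_apply]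
          ring
      _ = qGenocchiSeries q (α + 1) x 0 * (rescale m⁻¹ (qExpSeries q 1) - 1) := by
          rw [qGenocchiSeries_succ_zero hq]
          ring
      _ = _ := by
          rw [qExpSeries_one_eq, map_add, map_one, map_mul, rescale_X]
          ring
  have hb0 : b 0 = 0 := by simpa [qFact] using congrArg (coeff 0) hbSeries
  refine mul_left_cancel₀ X_ne_zero (hbSeries ▸ ?_)
  rw [X_mul_qEGF hq]
  congr 1
  funext n
  rcases n with _ | k
  · simp [qInt_zero, hb0]
  · rw [Nat.add_sub_cancel, mul_div_cancel₀ _ (hq k)]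
    simp only [hb, hconv, qGenocchiBracket, Nat.add_sub_cancel, Nat.cast_succ,
      sub_add_eq_sub_sub]

lemma qEGF_zpow_mul_qBernoulli (hq : ∀ n : ℕ, qInt q (n + 1) ≠ 0) {m : ℂ} (hm : m ≠ 0)
    (y : ℂ) :
    qEGF q (fun l => m ^ ((1 : ℤ) - l) * qBernoulli q 0 (m * y) l) =
      C m * rescale m⁻¹ (PowerSeries.mk fun k => (qFact q (k + 1))⁻¹)⁻¹ * qExpSeries' q y := by
  rw [← inv_mul_cancel_left₀ hm y, ← rescale_qExpSeries', mul_assoc, ← map_mul,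
    ← qEGF_qBernoulli hq, rescale_qEGF, ← qEGF_const_mul]
  congr 1
  funext l
  rw [zpow_sub₀ hm, zpow_one, zpow_natCast, inv_pow, mul_inv_cancel_left₀ hm]
  ring

lemma qGenocchiSeries_srivastava_pinter (hq : ∀ n : ℕ, qInt q (n + 1) ≠ 0) (α : ℕ) {m : ℂ}
    (hm : m ≠ 0) (x y : ℂ) :
    qGenocchiSeries q (α + 1) x y =
      qEGF q (fun k => qGenocchiBracket q α m x k / qInt q (k + 1)) *
        qEGF q (fun l => m ^ ((1 : ℤ) - l) * qBernoulli q 0 (m * y) l) := by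
  set D : PowerSeries ℂ := PowerSeries.mk fun k => (qFact q (k + 1))⁻¹
  have hD : rescale m⁻¹ D * rescale m⁻¹ D⁻¹ = 1 := by
    rw [← map_mul, PowerSeries.mul_inv_cancel _ (by simp [D, qFact, hq 0]), map_one]
  have hC : C m⁻¹ * C m = 1 := by rw [← map_mul, inv_mul_cancel₀ hm, map_one]
  rw [qEGF_qGenocchiBracket hq, qEGF_zpow_mul_qBernoulli hq hm,
    ← qGenocchiSeries_mul_qExpSeries']
  linear_combination (-(qGenocchiSeries q (α + 1) x 0 * qExpSeries' q y) *
    (rescale m⁻¹ D * rescale m⁻¹ D⁻¹)) * hC - qGenocchiSeries q (α + 1) x 0 * qExpSeries' q y * hD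

end QCalculus

/-- Srivastava–Pintér type theorem relating `q`-Genocchi and `q`-Bernoulli polynomials. -/
theorem qGenocchi_srivastava_pinter (q : ℂ) (hq : ∀ n : ℕ, qInt q (n + 1) ≠ 0)
    (α : ℕ) (hα : 1 ≤ α) (m : ℕ) (hm : 1 ≤ m) (n : ℕ) (x y : ℂ) :
    qGenocchi q α x y n =
      ∑ k ∈ Finset.range (n + 1),
        qBinom q n k * ((m : ℂ) ^ ((k : ℤ) + 1 - (n : ℤ)) / qInt q (k + 1)) *
          (2 * qInt q (k + 1) *
              (∑ j ∈ Finset.range (k + 1),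
                qBinom q k j * (m : ℂ) ^ ((j : ℤ) - (k : ℤ)) * qGenocchi q (α - 1) x (-1) j) -
            (∑ j ∈ Finset.range (k + 2),
              qBinom q (k + 1) j * (m : ℂ) ^ ((j : ℤ) - (k : ℤ) - 1) * qGenocchi q α x (-1) j) -
            qGenocchi q α x 0 (k + 1)) *
          qBernoulli q 0 ((m : ℂ) * y) (n - k) := by
  obtain ⟨α, rfl⟩ : ∃ a, α = a + 1 := ⟨α - 1, by omega⟩
  have hm0 : (m : ℂ) ≠ 0 := Nat.cast_ne_zero.2 (by omega)
  have hseries := qGenocchiSeries_srivastava_pinter hq α hm0 x y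
  rw [← qEGF_qGenocchi hq, qEGF_mul hq] at hseries
  rw [congrFun (qEGF_injective hq hseries) n, Nat.add_sub_cancel]
  refine Finset.sum_congr rfl fun k hk => ?_
  have hexp : (1 : ℤ) - ((n - k : ℕ) : ℤ) = k + 1 - n := by
    have := Finset.mem_range_succ_iff.mp hk
    omega
  rw [hexp, qGenocchiBracket]
  ring
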